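/- arXiv:2009.11131 — 3 statements merged into one kernel-verified Lean document; each statement's English description precedes it below -/
import Mathlib

section
/- Let ω_rα > 0, ω_l > 0, β ≥ 0, λ ∈ (−1, 0], and ω > 0. Define z(ω) = iω/ω_rα² + 2β/ω_rα + (1 + iω/ω_l)^λ ∈ ℂ, using the principal branch of the complex power. Then arg z(ω) = 0 (equivalently, the FOSRE phase ψ(ω) = −arg z(ω) vanishes) if and only if ω = −ω_rα² · (ω²/ω_l² + 1)^{λ/2} · sin(λ · arctan(ω/ω_l)). -/
/-!
Write `x = 1 + iω/ω_l`. Since `Re x > 0`, `|arg x| < π/2`, and `arg x = arctan (ω/ω_l)`; for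
`|λ| ≤ 1` the principal power `x^λ = ‖x‖^λ e^{iλ arg x}` therefore has positive real part. With
`β ≥ 0` the real part of `z` is then positive, so `arg z = 0` reduces to `Im z = 0`, which is the
stated equation after substituting `‖x‖^λ = (ω²/ω_l² + 1)^{λ/2}`.
-/

open Real Complex

lemma Real.cos_mul_pos_of_abs_lt {θ lam : ℝ} (hθ : |θ| < π / 2) (hlam : |lam| ≤ 1) :
    0 < cos (θ * lam) := by
  refine cos_pos_of_mem_Ioo (abs_lt.1 ?_)
  calc |θ * lam| = |θ| * |lam| := abs_mul θ lam
    _ ≤ |θ| := mul_le_of_le_one_right (abs_nonneg θ) hlam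
    _ < π / 2 := hθ

namespace Complex

lemma arg_eq_arctan_of_re_pos {x : ℂ} (hx : 0 < x.re) :
    arg x = Real.arctan (x.im / x.re) := by
  have h := abs_lt.1 (abs_arg_lt_pi_div_two_iff.2 (Or.inl hx))
  rw [← tan_arg, Real.arctan_tan h.1 h.2]

lemma norm_rpow_eq_normSq_rpow (x : ℂ) (y : ℝ) : ‖x‖ ^ y = normSq x ^ (y / 2) := by
  rw [norm_def, sqrt_eq_rpow, ← rpow_mul (normSq_nonneg x)]
  ring_nf

lemma arg_add_cpow_eq_zero_iff {x : ℂ} (hx : 0 < x.re) {b c lam : ℝ} (hb : 0 ≤ b)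
    (hlam : |lam| ≤ 1) :
    arg (c * I + b + x ^ (lam : ℂ)) = 0 ↔ c = -(‖x‖ ^ lam * Real.sin (arg x * lam)) := by
  have hcos : 0 < Real.cos (arg x * lam) :=
    cos_mul_pos_of_abs_lt (abs_arg_lt_pi_div_two_iff.2 (Or.inl hx)) hlam
  have hre : 0 ≤ b + ‖x‖ ^ lam * Real.cos (arg x * lam) := by positivity
  simp only [arg_eq_zero_iff, add_re, add_im, cpow_ofReal_re, cpow_ofReal_im, mul_re, mul_im,
    ofReal_re, ofReal_im, I_re, I_im]
  constructor
  · rintro ⟨-, h⟩; linarith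
  · intro h; exact ⟨by linarith, by linarith⟩

end Complex

theorem fosre_linear_behaviour_frequency_general
    (ωrα ωl β lam ω : ℝ)
    (hωrα : 0 < ωrα) (hβ : 0 ≤ β)
    (hlam : lam ∈ Set.Ioc (-1 : ℝ) 0)
    (z : ℂ)
    (hz : z = Complex.I * ω / (ωrα ^ 2) + 2 * β / ωrα
              + (1 + Complex.I * ω / ωl) ^ (lam : ℂ)) :
    z.arg = 0 ↔
      ω = -ωrα ^ 2 * (ω ^ 2 / ωl ^ 2 + 1) ^ (lam / 2) *
            Real.sin (lam * Real.arctan (ω / ωl)) := by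
  set x : ℂ := 1 + ((ω / ωl : ℝ) : ℂ) * I
  have hx_re : x.re = 1 := by simp [x]
  have hx_im : x.im = ω / ωl := by simp [x]
  have hx_pos : 0 < x.re := hx_re ▸ one_pos
  have hlam' : |lam| ≤ 1 := abs_le.2 ⟨hlam.1.le, hlam.2.trans zero_le_one⟩
  have hz' : z = ((ω / ωrα ^ 2 : ℝ) : ℂ) * I + ((2 * β / ωrα : ℝ) : ℂ) + x ^ (lam : ℂ) := by
    have hx : 1 + I * ω / ωl = x := by simp only [x]; push_cast; ring
    rw [hz, hx]; push_cast; ring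
  have hnorm : ‖x‖ ^ lam = (ω ^ 2 / ωl ^ 2 + 1) ^ (lam / 2) := by
    rw [norm_rpow_eq_normSq_rpow, normSq_apply, hx_re, hx_im]
    congr 1
    ring
  rw [hz', arg_add_cpow_eq_zero_iff hx_pos (by positivity) hlam',
    hnorm, arg_eq_arctan_of_re_pos hx_pos, hx_re, hx_im, div_one,
    mul_comm (Real.arctan _)]
  rw [div_eq_iff (by positivity)]
  constructor <;> intro h <;> linear_combination h

/-- The FOSRE linear-behaviour frequency equation: for ω_rα > 0, ω_l > 0, β ≥ 0,
λ ∈ (−1, 0] and ω > 0, the argument of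
z(ω) = iω/ω_rα² + 2β/ω_rα + (1 + iω/ω_l)^λ (principal branch) vanishes
iff ω = −ω_rα² (ω²/ω_l² + 1)^{λ/2} sin(λ arctan(ω/ω_l)). -/
theorem fosre_linear_behaviour_frequency
    (ωrα ωl β lam ω : ℝ)
    (hωrα : 0 < ωrα) (hωl : 0 < ωl) (hβ : 0 ≤ β)
    (hlam : lam ∈ Set.Ioc (-1 : ℝ) 0) (hω : 0 < ω)
    (z : ℂ)
    (hz : z = Complex.I * ω / (ωrα ^ 2) + 2 * β / ωrα
              + (1 + Complex.I * ω / ωl) ^ (lam : ℂ)) :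
    z.arg = 0 ↔
      ω = -ωrα ^ 2 * (ω ^ 2 / ωl ^ 2 + 1) ^ (lam / 2) *
            Real.sin (lam * Real.arctan (ω / ωl)) :=
  fosre_linear_behaviour_frequency_general ωrα ωl β lam ω hωrα hβ hlam z hz
end

section
/- Let A be a real n×n matrix, B ∈ ℝⁿ, and ω > 0 such that iω is not an eigenvalue of A (viewed over ℂ). Define x : ℝ → ℝⁿ by x(t) = Im(e^{iωt} · (iωI − A)⁻¹ B) (imaginary part taken entrywise). Then: (i) x is differentiable and x′(t) = A x(t) + B sin(ωt) for all t; (ii) if the first entry of (iωI − A)⁻¹ B is a real number, then the first component of x satisfies x₁(t) = 0 whenever sin(ωt) = 0, and hence for the reset matrix A_ρ = diag(γ, 1, …, 1) (any γ ∈ ℝ) one has A_ρ x(kπ/ω) = x(kπ/ω) for every integer k. -/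
/-!
With `c = (iωI - A)⁻¹ B` we have `iω c = A c + B`, so the phasor `z(t) = e^{iωt} c` satisfies
`z' = iω z = A z + e^{iωt} B`. As `A` and `B` are real, taking imaginary parts gives
`x' = A x + sin(ωt) B`. If `c₀` is real then `x₀(t) = sin(ωt) c₀`, which vanishes at the reset
instants `kπ/ω`, where `diag(γ, 1, …, 1)` therefore fixes `x`.
-/

open Real Complex Matrix

theorem Matrix.smul_mulVec_inv_smul_one_sub_mulVec {n K : Type*} [Fintype n] [DecidableEq n]
    [Field K] (A : Matrix n n K) (z : K) (b : n → K) (h : (z • (1 : Matrix n n K) - A).det ≠ 0) :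
    z • ((z • 1 - A)⁻¹ *ᵥ b) = A *ᵥ ((z • 1 - A)⁻¹ *ᵥ b) + b := by
  have hsolve : (z • 1 - A) *ᵥ ((z • 1 - A)⁻¹ *ᵥ b) = b := by
    rw [mulVec_mulVec, mul_nonsing_inv _ (isUnit_iff_ne_zero.mpr h), one_mulVec]
  rw [sub_mulVec, smul_mulVec, one_mulVec] at hsolve
  nth_rewrite 3 [← hsolve]
  abel

theorem Matrix.im_map_ofReal_mulVec {m n : Type*} [Fintype n] (A : Matrix m n ℝ) (v : n → ℂ)
    (i : m) : ((A.map ofReal *ᵥ v) i).im = (A *ᵥ fun j => (v j).im) i := by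
  simp [mulVec, dotProduct, im_sum]

theorem Real.sin_mul_int_mul_pi_div (ω : ℝ) (k : ℤ) : Real.sin (ω * (k * π / ω)) = 0 := by
  rcases eq_or_ne ω 0 with rfl | hω
  · simp
  · rw [mul_div_cancel₀ _ hω, Real.sin_int_mul_pi]

theorem Matrix.diagonal_ite_mulVec_of_apply_eq_zero {n R : Type*} [Fintype n] [DecidableEq n]
    [Semiring R] (i₀ : n) (γ : R) {v : n → R} (hv : v i₀ = 0) :
    diagonal (fun i => if i = i₀ then γ else 1) *ᵥ v = v := by
  ext i
  rw [mulVec_diagonal]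
  split_ifs with hi
  · rw [hi, hv, mul_zero]
  · rw [one_mul]

noncomputable def sinusoidalResponse {ι : Type*} (ω : ℝ) (c : ι → ℂ) (t : ℝ) : ι → ℝ :=
  fun i => (Complex.exp (I * ω * t) * c i).im

section sinusoidalResponse

variable {ι : Type*} (ω : ℝ) (t : ℝ)

theorem hasDerivAt_sinusoidalResponse (c : ι → ℂ) (i : ι) :
    HasDerivAt (fun s => sinusoidalResponse ω c s i)
      (sinusoidalResponse ω ((I * ω) • c) t i) t := by
  have hphase : HasDerivAt (fun s : ℝ => I * ω * (s : ℂ)) (I * ω) t := by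
    simpa using ((hasDerivAt_id t).ofReal_comp).const_mul (I * ω)
  refine (imCLM.hasFDerivAt.comp_hasDerivAt t (hphase.cexp.mul_const (c i))).congr_deriv ?_
  simp only [sinusoidalResponse, Pi.smul_apply, smul_eq_mul, imCLM_apply, mul_assoc]

theorem sinusoidalResponse_apply (c : ι → ℂ) (i : ι) :
    sinusoidalResponse ω c t i = Real.sin (ω * t) * (c i).re + Real.cos (ω * t) * (c i).im := by
  have hphase : I * ω * t = ((ω * t : ℝ) : ℂ) * I := by push_cast; ring
  rw [sinusoidalResponse, hphase, mul_im, exp_ofReal_mul_I_re, exp_ofReal_mul_I_im]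
  ring

theorem sinusoidalResponse_add (c d : ι → ℂ) :
    sinusoidalResponse ω (c + d) t = sinusoidalResponse ω c t + sinusoidalResponse ω d t := by
  ext i
  simp [sinusoidalResponse, mul_add]

theorem sinusoidalResponse_map_ofReal_mulVec [Fintype ι] (A : Matrix ι ι ℝ) (c : ι → ℂ) :
    sinusoidalResponse ω (A.map ofReal *ᵥ c) t = A *ᵥ sinusoidalResponse ω c t := by
  ext i
  rw [sinusoidalResponse, ← smul_eq_mul, ← Pi.smul_apply, ← mulVec_smul, im_map_ofReal_mulVec]
  rfl

theorem sinusoidalResponse_ofReal (b : ι → ℝ) :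
    sinusoidalResponse ω (fun j => (b j : ℂ)) t = Real.sin (ω * t) • b := by
  ext i
  simp [sinusoidalResponse_apply]

theorem sinusoidalResponse_apply_eq_zero {c : ι → ℂ} {i : ι} (hc : (c i).im = 0)
    (ht : Real.sin (ω * t) = 0) : sinusoidalResponse ω c t i = 0 := by
  rw [sinusoidalResponse_apply, ht, hc, zero_mul, mul_zero, add_zero]

end sinusoidalResponse

theorem reset_invariant_steady_state_general (n : ℕ)
    (A : Matrix (Fin (n + 1)) (Fin (n + 1)) ℝ) (B : Fin (n + 1) → ℝ)
    (ω : ℝ)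
    (hdet : ((Complex.I * ω) • (1 : Matrix (Fin (n + 1)) (Fin (n + 1)) ℂ)
              - A.map Complex.ofReal).det ≠ 0)
    (x : ℝ → Fin (n + 1) → ℝ)
    (hx : ∀ t i, x t i =
      (Complex.exp (Complex.I * ω * t) *
        ((((Complex.I * ω) • (1 : Matrix (Fin (n + 1)) (Fin (n + 1)) ℂ)
            - A.map Complex.ofReal)⁻¹ *ᵥ fun j => ((B j : ℝ) : ℂ)) i)).im) :
    (∀ t i, HasDerivAt (fun s => x s i)
        ((A *ᵥ x t) i + Real.sin (ω * t) * B i) t) ∧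
    (((((Complex.I * ω) • (1 : Matrix (Fin (n + 1)) (Fin (n + 1)) ℂ)
          - A.map Complex.ofReal)⁻¹ *ᵥ fun j => ((B j : ℝ) : ℂ)) 0).im = 0 →
      (∀ t : ℝ, Real.sin (ω * t) = 0 → x t 0 = 0) ∧
      ∀ (γ : ℝ) (k : ℤ),
        Matrix.diagonal (fun i : Fin (n + 1) => if i = 0 then γ else 1) *ᵥ
            x (k * Real.pi / ω) = x (k * Real.pi / ω)) := by
  set c := ((I * ω) • (1 : Matrix (Fin (n + 1)) (Fin (n + 1)) ℂ) - A.map ofReal)⁻¹ *ᵥ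
    fun j => (B j : ℂ) with hc
  obtain rfl : x = sinusoidalResponse ω c := funext fun t => funext (hx t)
  refine ⟨fun t i => ?_, fun hc₀ => ⟨fun t ht => ?_, fun γ k => ?_⟩⟩
  · have hode := hasDerivAt_sinusoidalResponse ω t c i
    rwa [hc, smul_mulVec_inv_smul_one_sub_mulVec _ _ _ hdet, sinusoidalResponse_add,
      sinusoidalResponse_map_ofReal_mulVec, sinusoidalResponse_ofReal] at hode
  · exact sinusoidalResponse_apply_eq_zero ω t hc₀ ht
  · exact diagonal_ite_mulVec_of_apply_eq_zero 0 γ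
      (sinusoidalResponse_apply_eq_zero ω _ hc₀ (Real.sin_mul_int_mul_pi_div ω k))

/-- Steady-state sinusoidal response of the base linear dynamics
ẋ = Ax + B sin(ωt), and invariance under the reset map when the first entry of
(iωI − A)⁻¹B is real: x(t) = Im(e^{iωt}(iωI − A)⁻¹B) solves the ODE, its first
component vanishes at every zero crossing of sin(ωt) (the reset instants
t = kπ/ω), and there A_ρ = diag(γ,1,…,1) acts as the identity on x. -/
theorem reset_invariant_steady_state (n : ℕ)
    (A : Matrix (Fin (n + 1)) (Fin (n + 1)) ℝ) (B : Fin (n + 1) → ℝ)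
    (ω : ℝ) (hω : 0 < ω)
    (hdet : ((Complex.I * ω) • (1 : Matrix (Fin (n + 1)) (Fin (n + 1)) ℂ)
              - A.map Complex.ofReal).det ≠ 0)
    (x : ℝ → Fin (n + 1) → ℝ)
    (hx : ∀ t i, x t i =
      (Complex.exp (Complex.I * ω * t) *
        ((((Complex.I * ω) • (1 : Matrix (Fin (n + 1)) (Fin (n + 1)) ℂ)
            - A.map Complex.ofReal)⁻¹ *ᵥ fun j => ((B j : ℝ) : ℂ)) i)).im) :
    (∀ t i, HasDerivAt (fun s => x s i)
        ((A *ᵥ x t) i + Real.sin (ω * t) * B i) t) ∧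
    (((((Complex.I * ω) • (1 : Matrix (Fin (n + 1)) (Fin (n + 1)) ℂ)
          - A.map Complex.ofReal)⁻¹ *ᵥ fun j => ((B j : ℝ) : ℂ)) 0).im = 0 →
      (∀ t : ℝ, Real.sin (ω * t) = 0 → x t 0 = 0) ∧
      ∀ (γ : ℝ) (k : ℤ),
        Matrix.diagonal (fun i : Fin (n + 1) => if i = 0 then γ else 1) *ᵥ
            x (k * Real.pi / ω) = x (k * Real.pi / ω)) :=
  reset_invariant_steady_state_general n A B ω hdet x hx
end

section
/- Let n_p, n_nr, n_r be natural numbers and consider vectors partitioned as x = (x_p, x_nr, x_r) ∈ ℝ^{n_p} × ℝ^{n_nr} × ℝ^{n_r}. Let P be a symmetric real matrix on ℝ^{n_p+n_nr+n_r}, partitioned conformally, let C_p ∈ ℝ^{1×n_p}, β ∈ ℝ^{n_r×1}, P_ρ ∈ ℝ^{n_r×n_r}, and A_ρ ∈ ℝ^{n_r×n_r}. Assume the bottom block row of P satisfies (P_{r,p}, P_{r,nr}, P_{r,r}) = (βC_p, 0, P_ρ) (i.e. B₀ᵀP = C₀ with B₀ = [0; 0; I_{n_r}] and C₀ = [βC_p,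 0, P_ρ]), and that A_ρᵀ P_ρ A_ρ − P_ρ is negative semidefinite. Then for every x = (x_p, x_nr, x_r) with C_p x_p = 0, the jumped vector Jx = (x_p, x_nr, A_ρ x_r) satisfies (Jx)ᵀ P (Jx) ≤ xᵀ P x. -/
/-!
Split the state as `(u, r)` with `u = (x_p, x_nr)` the non-resetting part. The block row
`(βC_p, 0)` of `P` annihilates `u` on the reset surface `C_p x_p = 0`, and by symmetry so does
the transposed block column, so the quadratic form decouples there into a term in `u` alone,
which the reset does not touch, plus `rᵀ P_ρ r`. The reset replaces the latter by
`(A_ρ r)ᵀ P_ρ (A_ρ r)`, which is smaller because `P_ρ - A_ρᵀ P_ρ A_ρ` is positive semidefinite.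
-/

open Matrix

theorem comp_equiv_dotProduct_submatrix_mulVec {m n R : Type*} [Fintype m] [Fintype n]
    [CommSemiring R] (P : Matrix n n R) (e : m ≃ n) (x : n → R) :
    (x ∘ e) ⬝ᵥ (P.submatrix e e *ᵥ (x ∘ e)) = x ⬝ᵥ (P *ᵥ x) := by
  rw [submatrix_mulVec_equiv, Function.comp_assoc, e.self_comp_symm, Function.comp_id,
    comp_equiv_dotProduct_comp_equiv]

theorem dotProduct_mulVec_mulVec_le_of_posSemidef_sub {κ : Type*} [Fintype κ]
    {D A : Matrix κ κ ℝ} (h : (D - Aᵀ * D * A).PosSemidef) (s : κ → ℝ) :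
    (A *ᵥ s) ⬝ᵥ (D *ᵥ (A *ᵥ s)) ≤ s ⬝ᵥ (D *ᵥ s) := by
  have hnonneg := h.dotProduct_mulVec_nonneg s
  rw [star_trivial, sub_mulVec, dotProduct_sub, ← mulVec_mulVec, ← mulVec_mulVec,
    dotProduct_mulVec s Aᵀ, vecMul_transpose] at hnonneg
  exact sub_nonneg.mp hnonneg

section BlockQuadraticForm

variable {ι κ : Type*} [Fintype ι] [Fintype κ]

theorem sumElim_dotProduct_mulVec_sumElim_of_toBlocks₂₁_mulVec_eq_zero {R : Type*}
    [CommSemiring R] {P : Matrix (ι ⊕ κ) (ι ⊕ κ) R} (hP : P.IsSymm) {u : ι → R}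
    (hu : P.toBlocks₂₁ *ᵥ u = 0) (s : κ → R) :
    Sum.elim u s ⬝ᵥ (P *ᵥ Sum.elim u s) =
      u ⬝ᵥ (P.toBlocks₁₁ *ᵥ u) + s ⬝ᵥ (P.toBlocks₂₂ *ᵥ s) := by
  have h₁₂ : P.toBlocks₁₂ = P.toBlocks₂₁ᵀ :=
    ((isSymm_fromBlocks_iff.mp (P.fromBlocks_toBlocks ▸ hP)).2.2.1).symm
  have hcross : u ⬝ᵥ (P.toBlocks₁₂ *ᵥ s) = 0 := by
    rw [h₁₂, dotProduct_mulVec, vecMul_transpose, hu, zero_dotProduct]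
  conv_lhs => rw [← P.fromBlocks_toBlocks]
  rw [fromBlocks_mulVec, sumElim_dotProduct_sumElim]
  simp only [Sum.elim_comp_inl, Sum.elim_comp_inr, dotProduct_add, hu, hcross,
    add_zero, zero_add]

theorem sumElim_dotProduct_mulVec_sumElim_mulVec_le
    {P : Matrix (ι ⊕ κ) (ι ⊕ κ) ℝ} (hP : P.IsSymm) {u : ι → ℝ}
    (hu : P.toBlocks₂₁ *ᵥ u = 0) {A : Matrix κ κ ℝ}
    (hA : (P.toBlocks₂₂ - Aᵀ * P.toBlocks₂₂ * A).PosSemidef) (s : κ → ℝ) :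
    Sum.elim u (A *ᵥ s) ⬝ᵥ (P *ᵥ Sum.elim u (A *ᵥ s)) ≤ Sum.elim u s ⬝ᵥ (P *ᵥ Sum.elim u s) := by
  rw [sumElim_dotProduct_mulVec_sumElim_of_toBlocks₂₁_mulVec_eq_zero hP hu,
    sumElim_dotProduct_mulVec_sumElim_of_toBlocks₂₁_mulVec_eq_zero hP hu]
  exact add_le_add_right (dotProduct_mulVec_mulVec_le_of_posSemidef_sub hA s) _

end BlockQuadraticForm

/-- Jump part of the H_β theorem: if the bottom block row of the symmetric
matrix P is (βC_p, 0, P_ρ) (i.e. B₀ᵀP = C₀) and A_ρᵀP_ρA_ρ − P_ρ ≤ 0, then the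
quadratic form xᵀPx does not increase across a reset x ↦ (x_p, x_nr, A_ρ x_r)
on the reset surface C_p x_p = 0. -/
theorem hbeta_jump_condition (np nnr nr : ℕ)
    (P : Matrix (Fin np ⊕ Fin nnr ⊕ Fin nr) (Fin np ⊕ Fin nnr ⊕ Fin nr) ℝ)
    (hPsymm : P.IsSymm)
    (Cp : Fin np → ℝ) (β : Fin nr → ℝ)
    (Pρ Aρ : Matrix (Fin nr) (Fin nr) ℝ)
    (hrow_p : ∀ (i : Fin nr) (j : Fin np),
      P (Sum.inr (Sum.inr i)) (Sum.inl j) = β i * Cp j)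
    (hrow_nr : ∀ (i : Fin nr) (j : Fin nnr),
      P (Sum.inr (Sum.inr i)) (Sum.inr (Sum.inl j)) = 0)
    (hrow_r : ∀ i j : Fin nr,
      P (Sum.inr (Sum.inr i)) (Sum.inr (Sum.inr j)) = Pρ i j)
    (hjump : (Pρ - Aρᵀ * Pρ * Aρ).PosSemidef) :
    ∀ x : Fin np ⊕ Fin nnr ⊕ Fin nr → ℝ,
      Cp ⬝ᵥ (fun j => x (Sum.inl j)) = 0 →
      ∀ Jx : Fin np ⊕ Fin nnr ⊕ Fin nr → ℝ,
        (∀ j, Jx (Sum.inl j) = x (Sum.inl j)) →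
        (∀ j, Jx (Sum.inr (Sum.inl j)) = x (Sum.inr (Sum.inl j))) →
        (∀ j, Jx (Sum.inr (Sum.inr j))
            = (Aρ *ᵥ fun i => x (Sum.inr (Sum.inr i))) j) →
        Jx ⬝ᵥ (P *ᵥ Jx) ≤ x ⬝ᵥ (P *ᵥ x) := by
  intro x hx Jx hJp hJnr hJr
  set e := Equiv.sumAssoc (Fin np) (Fin nnr) (Fin nr)
  set P' := P.submatrix e e
  set u : Fin np ⊕ Fin nnr → ℝ := x ∘ e ∘ Sum.inl
  set r : Fin nr → ℝ := fun i => x (Sum.inr (Sum.inr i))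
  have hx_split : x ∘ e = Sum.elim u r := by
    ext ((j | j) | j) <;> rfl
  have hJx_split : Jx ∘ e = Sum.elim u (Aρ *ᵥ r) := by
    ext ((j | j) | j)
    exacts [hJp j, hJnr j, hJr j]
  have hP'₂₂ : P'.toBlocks₂₂ = Pρ := by
    ext i j
    exact hrow_r i j
  have hP'₂₁ : P'.toBlocks₂₁ = fromCols (vecMulVec β Cp) 0 := by
    ext i (j | j)
    exacts [hrow_p i j, hrow_nr i j]
  have hu : P'.toBlocks₂₁ *ᵥ u = 0 := by
    rw [hP'₂₁, fromCols_mulVec, vecMulVec_mulVec, zero_mulVec, add_zero]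
    change MulOpposite.op (Cp ⬝ᵥ fun j => x (Sum.inl j)) • β = 0
    rw [hx, MulOpposite.op_zero, zero_smul]
  rw [← comp_equiv_dotProduct_submatrix_mulVec P e x,
    ← comp_equiv_dotProduct_submatrix_mulVec P e Jx, hx_split, hJx_split]
  exact sumElim_dotProduct_mulVec_sumElim_mulVec_le (hPsymm.submatrix e) hu (hP'₂₂ ▸ hjump) r
end
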